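/- Let (X,d) be a geodesic metric space, φ : X → ℝ, and γ ∈ Geo(X). If φ(γ_0) + φ^c(γ_1) = d²(γ_0,γ_1)/2 (where φ^c is the c-transform of φ for cost d²/2), then |∇g⁺φ|(γ_0) ≤ d(γ_0,γ_1); in fact even the full ascending slope satisfies |∇⁺φ|(γ_0) ≤ d(γ_0,γ_1). -/

import Mathlib

open Filter Set Metric MeasureTheory Topology
open scoped ENNReal NNReal

variable {X : Type*} [MetricSpace X]

/-- A constant-speed geodesic parametrized on `[0,1]` (as a map from `ℝ`). -/
def IsGeodesicSeg (γ : ℝ → X) : Prop :=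
  ∀ s ∈ Set.Icc (0:ℝ) 1, ∀ t ∈ Set.Icc (0:ℝ) 1,
    dist (γ s) (γ t) = |t - s| * dist (γ 0) (γ 1)

/-- The lower ascending slope along geodesics `|∇g⁺ f|(x)`. -/
noncomputable def geoSlope (f : X → ℝ) (x : X) : ℝ≥0∞ :=
  ⨆ γ ∈ {γ : ℝ → X | IsGeodesicSeg γ ∧ γ 0 = x ∧ γ 0 ≠ γ 1},
    Filter.liminf (fun s => ENNReal.ofReal (max (f (γ s) - f x) 0 / dist (γ s) x))
      (nhdsWithin (0:ℝ) (Set.Ioi 0))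

/-- The ordinary ascending slope `|∇⁺ f|(x)`. -/
noncomputable def ascSlope (f : X → ℝ) (x : X) : ℝ≥0∞ :=
  Filter.limsup (fun y => ENNReal.ofReal (max (f y - f x) 0 / dist y x))
    (nhdsWithin x {x}ᶜ)

/-- The `c`-transform for the cost `c = d²/2`, valued in `ℝ ∪ {±∞}`. -/
noncomputable def cTransform (φ : X → ℝ) (x : X) : EReal :=
  ⨅ y : X, ((dist x y ^ 2 / 2 - φ y : ℝ) : EReal)

/- The Kantorovich equality says that `z ↦ d²(z, γ₁)/2 - φ z` is minimal at `γ₀`, so by the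
triangle inequality `φ z - φ γ₀ ≤ (d²(z, γ₁) - d²(γ₀, γ₁))/2 ≤ d(γ₀, γ₁) d(z, γ₀) + d²(z, γ₀)/2`;
dividing by `d(z, γ₀)` bounds the ascending slope. Along a nonconstant geodesic from `γ₀`
the points `γ s` approach `γ₀` without reaching it, so the geodesic slope is at most the
ascending slope. -/

lemma sub_le_of_add_cTransform_eq {φ : X → ℝ} {x y : X}
    (heq : (φ x : EReal) + cTransform φ y = ((dist x y ^ 2 / 2 : ℝ) : EReal)) (z : X) :
    φ z - φ x ≤ (dist z y ^ 2 - dist x y ^ 2) / 2 := by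
  have hle : (φ x : EReal) + cTransform φ y ≤
      (φ x : EReal) + ((dist y z ^ 2 / 2 - φ z : ℝ) : EReal) :=
    add_le_add_right (iInf_le _ z) _
  rw [heq, ← EReal.coe_add, EReal.coe_le_coe_iff, dist_comm y z] at hle
  linarith

lemma sq_dist_sub_sq_dist_le (x y z : X) :
    dist z y ^ 2 - dist x y ^ 2 ≤ 2 * dist x y * dist z x + dist z x ^ 2 := by
  have htri : dist z y ≤ dist z x + dist x y := dist_triangle z x y
  nlinarith [dist_nonneg (x := z) (y := y)]

lemma ascSlope_le_of_sub_le {f : X → ℝ} {x : X} {L C : ℝ}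
    (h : ∀ z, f z - f x ≤ L * dist z x + C * dist z x ^ 2) :
    ascSlope f x ≤ ENNReal.ofReal L := by
  have hquot : ∀ z, ENNReal.ofReal (max (f z - f x) 0 / dist z x) ≤
      ENNReal.ofReal (L + C * dist z x) := by
    intro z
    rcases eq_or_ne z x with rfl | hz
    · simp
    have hd : 0 < dist z x := dist_pos.2 hz
    rw [ENNReal.ofReal_le_ofReal_iff']
    rcases le_total (f z - f x) 0 with hv | hv
    · simp [max_eq_right hv]
    · rw [max_eq_left hv, div_le_iff₀ hd]
      exact Or.inl ((h z).trans_eq (by ring))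
  have hlim :
      Tendsto (fun z => ENNReal.ofReal (L + C * dist z x)) (𝓝 x) (𝓝 (ENNReal.ofReal L)) := by
    have hcont : Continuous fun z => L + C * dist z x := by fun_prop
    simpa using ENNReal.tendsto_ofReal (hcont.tendsto x)
  calc ascSlope f x ≤ limsup (fun z => ENNReal.ofReal (L + C * dist z x)) (𝓝[≠] x) :=
        limsup_le_limsup (Eventually.of_forall hquot)
    _ ≤ limsup (fun z => ENNReal.ofReal (L + C * dist z x)) (𝓝 x) :=
        limsup_le_limsup_of_le nhdsWithin_le_nhds
    _ = ENNReal.ofReal L := hlim.limsup_eq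

lemma IsGeodesicSeg.dist_apply_zero {γ : ℝ → X} (hγ : IsGeodesicSeg γ) {s : ℝ}
    (hs : s ∈ Icc (0 : ℝ) 1) :
    dist (γ s) (γ 0) = s * dist (γ 0) (γ 1) := by
  rw [hγ s hs 0 (left_mem_Icc.2 zero_le_one), zero_sub, abs_neg, abs_of_nonneg hs.1]

lemma IsGeodesicSeg.tendsto_nhdsNE {γ : ℝ → X} (hγ : IsGeodesicSeg γ) (hne : γ 0 ≠ γ 1) :
    Tendsto γ (𝓝[>] 0) (𝓝[≠] (γ 0)) := by
  have hdist : ∀ᶠ s in 𝓝[>] 0, dist (γ s) (γ 0) = s * dist (γ 0) (γ 1) := by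
    filter_upwards [Ioo_mem_nhdsGT zero_lt_one] with s hs
    exact hγ.dist_apply_zero (Ioo_subset_Icc_self hs)
  refine tendsto_nhdsWithin_iff.2 ⟨tendsto_iff_dist_tendsto_zero.2 ?_, ?_⟩
  · refine Tendsto.congr' (hdist.mono fun _ => Eq.symm) ?_
    have hlin : Tendsto (fun s : ℝ => s * dist (γ 0) (γ 1)) (𝓝 0) (𝓝 0) := by
      simpa using (continuous_mul_const (dist (γ 0) (γ 1))).tendsto 0
    exact hlin.mono_left nhdsWithin_le_nhds
  · filter_upwards [hdist, self_mem_nhdsWithin] with s hs hpos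
    rw [mem_compl_singleton_iff, ← dist_pos, hs]
    exact mul_pos hpos (dist_pos.2 hne)

lemma geoSlope_le_ascSlope (f : X → ℝ) (x : X) : geoSlope f x ≤ ascSlope f x := by
  refine iSup₂_le fun γ ⟨hγ, hx, hne⟩ => ?_
  subst hx
  calc _ ≤ limsup _ (𝓝[>] (0 : ℝ)) := liminf_le_limsup
    _ = limsup _ (map γ (𝓝[>] 0)) := limsup_comp _ γ _
    _ ≤ ascSlope f (γ 0) := limsup_le_limsup_of_le (hγ.tendsto_nhdsNE hne)

theorem slope_le_of_kantorovich_eq_general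
    (γ : ℝ → X) (φ : X → ℝ)
    (heq : (φ (γ 0) : EReal) + cTransform φ (γ 1) =
      ((dist (γ 0) (γ 1) ^ 2 / 2 : ℝ) : EReal)) :
    ascSlope φ (γ 0) ≤ ENNReal.ofReal (dist (γ 0) (γ 1)) ∧
      geoSlope φ (γ 0) ≤ ENNReal.ofReal (dist (γ 0) (γ 1)) := by
  have hasc : ascSlope φ (γ 0) ≤ ENNReal.ofReal (dist (γ 0) (γ 1)) :=
    ascSlope_le_of_sub_le (C := 1 / 2) fun z => by
      linarith [sub_le_of_add_cTransform_eq heq z, sq_dist_sub_sq_dist_le (γ 0) (γ 1) z]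
  exact ⟨hasc, (geoSlope_le_ascSlope φ (γ 0)).trans hasc⟩

/-- If `φ(γ₀) + φ^c(γ₁) = d²(γ₀,γ₁)/2` then the ascending slope (hence also the slope
along geodesics) of `φ` at `γ₀` is at most `d(γ₀,γ₁)`. -/
theorem slope_le_of_kantorovich_eq
    (γ : ℝ → X) (hγ : IsGeodesicSeg γ) (φ : X → ℝ)
    (heq : (φ (γ 0) : EReal) + cTransform φ (γ 1) =
      ((dist (γ 0) (γ 1) ^ 2 / 2 : ℝ) : EReal)) :
    ascSlope φ (γ 0) ≤ ENNReal.ofReal (dist (γ 0) (γ 1)) ∧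
      geoSlope φ (γ 0) ≤ ENNReal.ofReal (dist (γ 0) (γ 1)) :=
  slope_le_of_kantorovich_eq_general γ φ heq
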